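/- In the Set Cover fitness graph, let X ⊆ V be any configuration that covers V₂, i.e., every e ∈ V₂ belongs to some A ∈ X∩V₁. Then the probability that the Heterogeneous Moran process started at X ever reaches a configuration X* with V₂ ∪ (X∩V₁) ⊆ X* is at least ((x/n)/((x/n)+n))^{|V₂|}. -/

import Mathlib

open Finset
open scoped Classical

/-- A fitness graph: a finite strongly connected weighted directed graph together with
mutant and resident fitness functions. `w u v > 0` encodes that `(u,v)` is an edge
of non-zero weight; `w u ·` is a probability distribution. -/
structure FitnessGraph (V : Type) [Fintype V] [DecidableEq V] where
  w : V → V → ℝ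
  m : V → ℝ
  r : V → ℝ
  w_nonneg : ∀ u v, 0 ≤ w u v
  w_rowsum : ∀ u, ∑ v, w u v = 1
  strongly_connected : ∀ u v : V, Relation.ReflTransGen (fun a b => 0 < w a b) u v
  m_pos : ∀ u, 0 < m u
  r_pos : ∀ u, 0 < r u

variable {V : Type} [Fintype V] [DecidableEq V]

/-- A fitness graph is mutant-biased if `m(u) ≥ r(u)` for every node `u`. -/
def FitnessGraph.MutantBiased (G : FitnessGraph V) : Prop :=
  ∀ u, G.r u ≤ G.m u

/-- The (out-)degree of a node: the number of neighbors along edges of non-zero weight. -/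
noncomputable def FitnessGraph.deg (G : FitnessGraph V) (u : V) : ℕ :=
  (Finset.univ.filter fun v => 0 < G.w u v).card

/-- A fitness graph is undirected if its edge relation is symmetric and the weights
are uniform: `w(u,v) = 1/d(u)` for every edge `(u,v)`. -/
def FitnessGraph.Undirected (G : FitnessGraph V) : Prop :=
  (∀ u v, 0 < G.w u v → 0 < G.w v u) ∧
  ∀ u v, 0 < G.w u v → G.w u v = 1 / (G.deg u : ℝ)

/-- The fitness of node `u` in configuration `X`: `m(u)` if `u` is a mutant, `r(u)` otherwise. -/
def FitnessGraph.fit (G : FitnessGraph V) (X : Finset V) (u : V) : ℝ :=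
  if u ∈ X then G.m u else G.r u

/-- Total population fitness in configuration `X`. -/
def FitnessGraph.totalFit (G : FitnessGraph V) (X : Finset V) : ℝ :=
  ∑ u, G.fit X u

/-- The configuration resulting from `X` when `u` reproduces and replaces `v`. -/
def moranNext (X : Finset V) (u v : V) : Finset V :=
  if u ∈ X then insert v X else X.erase v

/-- One-step transition probability of the Heterogeneous Moran process. -/
noncomputable def FitnessGraph.step (G : FitnessGraph V) (X Y : Finset V) : ℝ :=
  ∑ u, ∑ v, (G.fit X u / G.totalFit X) * G.w u v * (if moranNext X u v = Y then 1 else 0)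

/-- `t`-step transition probability of the Heterogeneous Moran process. -/
noncomputable def FitnessGraph.stepN (G : FitnessGraph V) : ℕ → Finset V → Finset V → ℝ
  | 0, X, Y => if X = Y then 1 else 0
  | t + 1, X, Y => ∑ Z, FitnessGraph.stepN G t X Z * G.step Z Y

/-- Fixation probability: the probability that, started from seed set `S`, the process
eventually reaches the all-mutant configuration `V`; since `V` is absorbing this equals
`⨆ t, P(X_t = V)`. -/
noncomputable def FitnessGraph.fp (G : FitnessGraph V) (S : Finset V) : ℝ :=
  ⨆ t : ℕ, G.stepN t S Finset.univ

/-- One-step transition probability of the Moran process stopped upon reaching the set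
of configurations `A` (configurations in `A` are made absorbing). -/
noncomputable def stopStep (G : FitnessGraph V) (A : Set (Finset V)) (X Y : Finset V) : ℝ :=
  if X ∈ A then (if Y = X then 1 else 0) else G.step X Y

/-- `t`-step transition probability of the stopped process. -/
noncomputable def stopStepN (G : FitnessGraph V) (A : Set (Finset V)) :
    ℕ → Finset V → Finset V → ℝ
  | 0, X, Y => if X = Y then 1 else 0
  | t + 1, X, Y => ∑ Z, stopStepN G A t X Z * stopStep G A Z Y

/-- The probability that the Heterogeneous Moran process started at `X0` ever reaches a
configuration in `A`: the supremum over `t` of the probability that the process stopped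
at `A` is in `A` at time `t`. -/
noncomputable def reachProb (G : FitnessGraph V) (A : Set (Finset V)) (X0 : Finset V) : ℝ :=
  ⨆ t : ℕ, ∑ Y ∈ Finset.univ.filter (fun Y => Y ∈ A), stopStepN G A t X0 Y

/-- The Set Cover fitness graph for an instance `(U, 𝒮)` with parameters `x ≥ 1` and
`0 < y ≤ 1`: the vertex set is `V₁ ⊔ V₂` with `V₁ = 𝒮`, `V₂ = U`; there is an edge from
`A ∈ V₁` to each `e ∈ A` and all edges from `V₂` to `V₁`, with uniform weights;
residents have fitness `1` everywhere, mutants have fitness `x` on `V₁` and `y` on `V₂`. -/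
def IsSetCoverGraph {U : Type} [Fintype U] [DecidableEq U] (𝒮 : Finset (Finset U))
    (x y : ℝ) (G : FitnessGraph ({A // A ∈ 𝒮} ⊕ U)) : Prop :=
  (∀ (A : {A // A ∈ 𝒮}) (e : U),
      G.w (Sum.inl A) (Sum.inr e) = if e ∈ A.1 then 1 / (A.1.card : ℝ) else 0) ∧
  (∀ A B : {A // A ∈ 𝒮}, G.w (Sum.inl A) (Sum.inl B) = 0) ∧
  (∀ (e : U) (A : {A // A ∈ 𝒮}), G.w (Sum.inr e) (Sum.inl A) = 1 / (𝒮.card : ℝ)) ∧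
  (∀ e e' : U, G.w (Sum.inr e) (Sum.inr e') = 0) ∧
  (∀ A : {A // A ∈ 𝒮}, G.m (Sum.inl A) = x) ∧
  (∀ e : U, G.m (Sum.inr e) = y) ∧
  (∀ u : {A // A ∈ 𝒮} ⊕ U, G.r u = 1)


/-! Write `n = |V|`, `c = (x/n)/((x/n)+n)` and `N` for the set nodes of `X`. The potential
`φ(Y) = c ^ #(V₂ \ Y)` for `N ⊆ Y`, `φ(Y) = 0` otherwise, is subharmonic for the process stopped
at the target: from `Y ⊇ N` missing some `e ∈ A ∈ N`, the node `A` fires towards `e` with weight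
at least `x/n` (dividing `φ` by `c`), residents fire with total weight at most `n` (and can at
worst send `φ` to `0`), and every other event leaves `φ` at least as large; `c` is chosen so that
`c * n = (x/n) * (1 - c)`. The target can be reached from every `Y` with `φ(Y) > 0`, so a maximum
principle applied to `φ - reachProb` gives `c ^ |V₂| ≤ φ(X) ≤ reachProb(X)`. -/

open Matrix Filter Topology

namespace FitnessGraph

variable (G : FitnessGraph V)

lemma fit_pos (X : Finset V) (u : V) : 0 < G.fit X u := by
  unfold fit
  split_ifs
  exacts [G.m_pos u, G.r_pos u]

lemma totalFit_pos [Nonempty V] (X : Finset V) : 0 < G.totalFit X :=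
  sum_pos (fun u _ => G.fit_pos X u) univ_nonempty

lemma totalFit_nonneg (X : Finset V) : 0 ≤ G.totalFit X :=
  sum_nonneg fun u _ => (G.fit_pos X u).le

lemma totalFit_eq_sum_add_card (hr : ∀ u, G.r u = 1) (Y : Finset V) :
    G.totalFit Y = ∑ u ∈ Y, G.fit Y u + #Yᶜ := by
  rw [totalFit, ← sum_add_sum_compl Y, card_eq_sum_ones, Nat.cast_sum, Nat.cast_one]
  congr 1
  exact sum_congr rfl fun u hu => by simp [fit, mem_compl.1 hu, hr]

lemma fit_div_totalFit_mul_w_nonneg (X : Finset V) (u v : V) :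
    0 ≤ G.fit X u / G.totalFit X * G.w u v :=
  mul_nonneg (div_nonneg (G.fit_pos X u).le (G.totalFit_nonneg X)) (G.w_nonneg u v)

lemma step_nonneg (X Y : Finset V) : 0 ≤ G.step X Y :=
  sum_nonneg fun u _ => sum_nonneg fun v _ =>
    mul_nonneg (G.fit_div_totalFit_mul_w_nonneg X u v) (by split_ifs <;> norm_num)

lemma sum_step_mul (X : Finset V) (φ : Finset V → ℝ) :
    ∑ Y, G.step X Y * φ Y
      = ∑ u, ∑ v, G.fit X u / G.totalFit X * G.w u v * φ (moranNext X u v) := by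
  simp only [step, sum_mul, mul_assoc, ite_mul, one_mul, zero_mul]
  rw [sum_comm]
  refine sum_congr rfl fun u _ => ?_
  rw [sum_comm]
  simp

lemma sum_step [Nonempty V] (X : Finset V) : ∑ Y, G.step X Y = 1 := by
  have := G.sum_step_mul X 1
  simp only [Pi.one_apply, mul_one, ← mul_sum, G.w_rowsum, ← sum_div] at this
  exact this.trans (div_self (G.totalFit_pos X).ne')

lemma fit_div_totalFit_mul_w_le_step {X : Finset V} {u : V} (hu : u ∈ X) (v : V) :
    G.fit X u / G.totalFit X * G.w u v ≤ G.step X (insert v X) := by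
  set term := fun u' v' => G.fit X u' / G.totalFit X * G.w u' v' *
    (if moranNext X u' v' = insert v X then 1 else 0)
  have hterm : ∀ u' v', 0 ≤ term u' v' := fun u' v' =>
    mul_nonneg (G.fit_div_totalFit_mul_w_nonneg X u' v') (by split_ifs <;> norm_num)
  calc G.fit X u / G.totalFit X * G.w u v = term u v := by simp [term, moranNext, hu]
    _ ≤ ∑ v', term u v' := single_le_sum (fun v' _ => hterm u v') (mem_univ v)
    _ ≤ ∑ u', ∑ v', term u' v' :=
        single_le_sum (f := fun u' => ∑ v', term u' v')
          (fun u' _ => sum_nonneg fun v' _ => hterm u' v') (mem_univ u)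

/-- Mutant reproductions change `Y` into some `insert v Y`, worth at least `a`, and one of them
into `insert v₀ Y`, worth at least `b`; resident reproductions are only bounded below by `0`. -/
lemma le_sum_step_mul {Y : Finset V} {φ : Finset V → ℝ} (hφ : 0 ≤ φ) {a b : ℝ}
    (ha : ∀ v, a ≤ φ (insert v Y)) {u₀ v₀ : V} (hu₀ : u₀ ∈ Y) (hb : b ≤ φ (insert v₀ Y)) :
    (∑ u ∈ Y, G.fit Y u) / G.totalFit Y * a + G.fit Y u₀ / G.totalFit Y * G.w u₀ v₀ * (b - a)
      ≤ ∑ Z, G.step Y Z * φ Z := by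
  set coef := fun u v => G.fit Y u / G.totalFit Y * G.w u v
  have hcoef : ∀ u v, 0 ≤ coef u v := G.fit_div_totalFit_mul_w_nonneg Y
  have hgain : ∀ u v, 0 ≤ coef u v * (φ (insert v Y) - a) := fun u v =>
    mul_nonneg (hcoef u v) (sub_nonneg.2 (ha v))
  have hmutants : ∑ u ∈ Y, ∑ v, coef u v * φ (insert v Y)
      = (∑ u ∈ Y, G.fit Y u) / G.totalFit Y * a
        + ∑ u ∈ Y, ∑ v, coef u v * (φ (insert v Y) - a) := by
    simp only [coef, mul_sub, sum_sub_distrib, ← sum_mul, ← mul_sum, G.w_rowsum, sum_div]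
    ring
  have hgood : coef u₀ v₀ * (b - a) ≤ ∑ u ∈ Y, ∑ v, coef u v * (φ (insert v Y) - a) :=
    calc coef u₀ v₀ * (b - a) ≤ coef u₀ v₀ * (φ (insert v₀ Y) - a) :=
          mul_le_mul_of_nonneg_left (sub_le_sub_right hb a) (hcoef u₀ v₀)
      _ ≤ ∑ v, coef u₀ v * (φ (insert v Y) - a) :=
          single_le_sum (fun v _ => hgain u₀ v) (mem_univ v₀)
      _ ≤ _ := single_le_sum (f := fun u => ∑ v, coef u v * (φ (insert v Y) - a))
          (fun u _ => sum_nonneg fun v _ => hgain u v) hu₀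
  have hresidents : ∑ u ∈ Y, ∑ v, coef u v * φ (insert v Y)
      ≤ ∑ u, ∑ v, coef u v * φ (moranNext Y u v) :=
    calc ∑ u ∈ Y, ∑ v, coef u v * φ (insert v Y)
        = ∑ u ∈ Y, ∑ v, coef u v * φ (moranNext Y u v) :=
          sum_congr rfl fun u hu => by simp [moranNext, hu]
      _ ≤ _ := sum_le_univ_sum_of_nonneg fun u =>
          sum_nonneg fun v _ => mul_nonneg (hcoef u v) (hφ _)
  rw [G.sum_step_mul]
  linarith

end FitnessGraph

namespace Matrix

variable {ι R : Type*} [Fintype ι] [DecidableEq ι] [Ring R] [PartialOrder R] [IsOrderedRing R]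
  {M : Matrix ι ι R}

lemma mulVec_mono_of_mem_rowStochastic (hM : M ∈ rowStochastic R ι) {f g : ι → R}
    (h : f ≤ g) : M *ᵥ f ≤ M *ᵥ g := fun i => by
  rw [← sub_nonneg, ← Pi.sub_apply, ← mulVec_sub]
  exact sum_nonneg fun j _ => mul_nonneg (nonneg_of_mem_rowStochastic hM) (sub_nonneg.2 (h j))

lemma le_pow_mulVec_of_le_mulVec (hM : M ∈ rowStochastic R ι) {f : ι → R} (h : f ≤ M *ᵥ f)
    (t : ℕ) : f ≤ M ^ t *ᵥ f := by
  induction t with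
  | zero => simp
  | succ t ih =>
    calc f ≤ M *ᵥ f := h
      _ ≤ M *ᵥ (M ^ t *ᵥ f) := mulVec_mono_of_mem_rowStochastic hM ih
      _ = M ^ (t + 1) *ᵥ f := by rw [mulVec_mulVec, pow_succ']

end Matrix

/-- A maximum principle: at a maximiser `i₀` with `f i₀ > 0` the weighted sum would be at most
`(∑ j ∈ S, p j) * f i₀ < f i₀`. -/
lemma nonpos_of_le_weighted_sum {ι : Type*} [Fintype ι] {f : ι → ℝ} (S : Finset ι)
    (hout : ∀ i ∉ S, f i ≤ 0)
    (hin : ∀ i ∈ S, ∃ p : ι → ℝ, (∀ j, 0 ≤ p j) ∧ ∑ j ∈ S, p j < 1 ∧ f i ≤ ∑ j, p j * f j)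
    (i : ι) : f i ≤ 0 := by
  by_contra! hi
  have : Nonempty ι := ⟨i⟩
  obtain ⟨i₀, hmax⟩ := Finite.exists_max f
  have hpos : 0 < f i₀ := hi.trans_le (hmax i)
  have hi₀ : i₀ ∈ S := by
    by_contra h
    exact (hout i₀ h).not_gt hpos
  obtain ⟨p, hp, hpS, hle⟩ := hin i₀ hi₀
  have hterm : ∀ j, p j * f j ≤ if j ∈ S then p j * f i₀ else 0 := fun j => by
    split_ifs with hj
    · exact mul_le_mul_of_nonneg_left (hmax j) (hp j)
    · exact mul_nonpos_of_nonneg_of_nonpos (hp j) (hout j hj)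
  have : f i₀ ≤ (∑ j ∈ S, p j) * f i₀ :=
    calc f i₀ ≤ ∑ j, p j * f j := hle
      _ ≤ ∑ j, if j ∈ S then p j * f i₀ else 0 := sum_le_sum fun j _ => hterm j
      _ = (∑ j ∈ S, p j) * f i₀ := by rw [sum_ite_mem, univ_inter, sum_mul]
  nlinarith

section StoppedChain

variable (G : FitnessGraph V) (A : Set (Finset V))

noncomputable def stopMatrix : Matrix (Finset V) (Finset V) ℝ := Matrix.of (stopStep G A)

lemma stopMatrix_apply_of_notMem {X : Finset V} (hX : X ∉ A) (Y : Finset V) :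
    stopMatrix G A X Y = G.step X Y := by
  simp [stopMatrix, stopStep, hX]

lemma stopMatrix_mulVec_of_mem {X : Finset V} (hX : X ∈ A) (f : Finset V → ℝ) :
    (stopMatrix G A *ᵥ f) X = f X := by
  simp [stopMatrix, stopStep, hX, mulVec, dotProduct]

lemma stopMatrix_mem_rowStochastic [Nonempty V] :
    stopMatrix G A ∈ rowStochastic ℝ (Finset V) := by
  refine mem_rowStochastic_iff_sum.2 ⟨fun X Y => ?_, fun X => ?_⟩
  · simp only [stopMatrix, of_apply, stopStep]
    split_ifs
    exacts [zero_le_one, le_rfl, G.step_nonneg X Y]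
  · simp only [stopMatrix, of_apply, stopStep]
    split_ifs
    exacts [by simp, G.sum_step X]

lemma stopStepN_eq_pow (t : ℕ) (X Y : Finset V) :
    stopStepN G A t X Y = (stopMatrix G A ^ t) X Y := by
  induction t generalizing Y with
  | zero => simp [stopStepN, one_apply]
  | succ t ih => simp [stopStepN, pow_succ, mul_apply, ih, stopMatrix]

noncomputable def hitProb (t : ℕ) : Finset V → ℝ := stopMatrix G A ^ t *ᵥ A.indicator 1

lemma hitProb_eq_sum (t : ℕ) (X : Finset V) :
    hitProb G A t X = ∑ Y ∈ univ.filter (· ∈ A), (stopMatrix G A ^ t) X Y := by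
  simp [hitProb, mulVec, dotProduct, sum_filter, Set.indicator_apply]

lemma reachProb_eq_iSup_hitProb (X : Finset V) : reachProb G A X = ⨆ t, hitProb G A t X := by
  simp only [reachProb, hitProb_eq_sum, stopStepN_eq_pow]

lemma hitProb_zero : hitProb G A 0 = A.indicator 1 := by simp [hitProb]

lemma hitProb_succ (t : ℕ) : hitProb G A (t + 1) = stopMatrix G A *ᵥ hitProb G A t := by
  rw [hitProb, hitProb, mulVec_mulVec, pow_succ']

lemma hitProb_add (s t : ℕ) : hitProb G A (s + t) = stopMatrix G A ^ s *ᵥ hitProb G A t := by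
  rw [hitProb, hitProb, mulVec_mulVec, pow_add]

lemma hitProb_of_mem {X : Finset V} (hX : X ∈ A) (t : ℕ) : hitProb G A t X = 1 := by
  induction t with
  | zero => simp [hitProb_zero, hX]
  | succ t ih => rw [hitProb_succ, stopMatrix_mulVec_of_mem G A hX, ih]

variable [Nonempty V]

lemma hitProb_nonneg (t : ℕ) : 0 ≤ hitProb G A t :=
  nonneg_mulVec_of_mem_rowStochastic (pow_mem (stopMatrix_mem_rowStochastic G A) t)
    fun _ => Set.indicator_nonneg (fun _ _ => zero_le_one) _

lemma hitProb_le_one (t : ℕ) : hitProb G A t ≤ 1 := by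
  have hM := pow_mem (stopMatrix_mem_rowStochastic G A) t
  calc hitProb G A t ≤ stopMatrix G A ^ t *ᵥ 1 :=
        mulVec_mono_of_mem_rowStochastic hM (Set.indicator_le_self' fun _ _ => zero_le_one)
    _ = 1 := one_vecMul_of_mem_rowStochastic hM

lemma monotone_hitProb (X : Finset V) : Monotone fun t => hitProb G A t X := by
  refine monotone_nat_of_le_succ fun t => ?_
  have hone : hitProb G A 0 ≤ hitProb G A 1 := fun Y => by
    by_cases hY : Y ∈ A
    · rw [hitProb_of_mem G A hY, hitProb_of_mem G A hY]
    · simpa [hitProb_zero, hY] using hitProb_nonneg G A 1 Y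
  simpa only [← hitProb_add, add_zero] using mulVec_mono_of_mem_rowStochastic
    (pow_mem (stopMatrix_mem_rowStochastic G A) t) hone X

lemma hitProb_le_reachProb (t : ℕ) (X : Finset V) : hitProb G A t X ≤ reachProb G A X := by
  rw [reachProb_eq_iSup_hitProb]
  exact le_ciSup ⟨1, Set.forall_mem_range.2 fun s => hitProb_le_one G A s X⟩ t

lemma tendsto_hitProb (X : Finset V) :
    Tendsto (fun t => hitProb G A t X) atTop (𝓝 (reachProb G A X)) := by
  rw [reachProb_eq_iSup_hitProb]
  exact tendsto_atTop_ciSup (monotone_hitProb G A X)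
    ⟨1, Set.forall_mem_range.2 fun s => hitProb_le_one G A s X⟩

lemma pow_mulVec_reachProb_le (t : ℕ) :
    stopMatrix G A ^ t *ᵥ reachProb G A ≤ reachProb G A := fun X => by
  have hlim : Tendsto (fun s => (stopMatrix G A ^ t *ᵥ hitProb G A s) X) atTop
      (𝓝 ((stopMatrix G A ^ t *ᵥ reachProb G A) X)) :=
    tendsto_finsetSum _ fun Y _ => (tendsto_hitProb G A Y).const_mul _
  refine le_of_tendsto' hlim fun s => ?_
  rw [← hitProb_add]
  exact hitProb_le_reachProb G A (t + s) X

lemma hitProb_succ_pos {X Y : Finset V} (hX : X ∉ A) (hstep : 0 < G.step X Y) {t : ℕ}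
    (ht : 0 < hitProb G A t Y) : 0 < hitProb G A (t + 1) X := by
  rw [hitProb_succ]
  refine lt_of_lt_of_le ?_ (single_le_sum (fun Z _ => mul_nonneg
    (nonneg_of_mem_rowStochastic (stopMatrix_mem_rowStochastic G A)) (hitProb_nonneg G A t Z))
    (mem_univ Y))
  rw [stopMatrix_apply_of_notMem G A hX]
  positivity

lemma sum_pow_stopMatrix_lt_one {S : Finset (Finset V)} (hS : ∀ Y ∈ S, Y ∉ A) {t : ℕ}
    {X : Finset V} (ht : 0 < hitProb G A t X) : ∑ Y ∈ S, (stopMatrix G A ^ t) X Y < 1 := by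
  have hMt := pow_mem (stopMatrix_mem_rowStochastic G A) t
  have hdisj : Disjoint S (univ.filter (· ∈ A)) :=
    disjoint_left.2 fun Y hY hYA => hS Y hY (mem_filter.1 hYA).2
  have := sum_le_univ_sum_of_nonneg (s := S ∪ univ.filter (· ∈ A))
    (f := (stopMatrix G A ^ t) X) fun Y => nonneg_of_mem_rowStochastic hMt
  rw [sum_union hdisj, ← hitProb_eq_sum, sum_row_of_mem_rowStochastic hMt] at this
  linarith

lemma le_reachProb_of_le_mulVec {φ : Finset V → ℝ} (hφ : φ ≤ stopMatrix G A *ᵥ φ)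
    (hA : ∀ X ∈ A, φ X ≤ 1) (hreach : ∀ X ∉ A, 0 < φ X → ∃ t, 0 < hitProb G A t X) :
    φ ≤ reachProb G A := by
  have hM := stopMatrix_mem_rowStochastic G A
  intro X
  rw [← sub_nonpos]
  refine nonpos_of_le_weighted_sum (f := φ - reachProb G A)
    (univ.filter fun Y => Y ∉ A ∧ 0 < φ Y) (fun Y hY => ?_) (fun Y hY => ?_) X
  · rw [Pi.sub_apply, sub_nonpos]
    have hreach₀ := hitProb_le_reachProb G A 0 Y
    by_cases hYA : Y ∈ A
    · rw [hitProb_of_mem G A hYA] at hreach₀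
      exact (hA Y hYA).trans hreach₀
    · have hφY : φ Y ≤ 0 := by simpa [hYA] using hY
      have hhit₀ : 0 ≤ hitProb G A 0 Y := hitProb_nonneg G A 0 Y
      linarith
  · obtain ⟨hYA, hφY⟩ := (mem_filter.1 hY).2
    obtain ⟨t, ht⟩ := hreach Y hYA hφY
    refine ⟨(stopMatrix G A ^ t) Y, fun Z => nonneg_of_mem_rowStochastic (pow_mem hM t),
      sum_pow_stopMatrix_lt_one G A (fun Z hZ => (mem_filter.1 hZ).2.1) ht, ?_⟩
    calc (φ - reachProb G A) Y
        ≤ (stopMatrix G A ^ t *ᵥ φ - stopMatrix G A ^ t *ᵥ reachProb G A) Y :=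
          sub_le_sub (le_pow_mulVec_of_le_mulVec hM hφ t Y) (pow_mulVec_reachProb_le G A t Y)
      _ = _ := by rw [← mulVec_sub]; rfl

end StoppedChain

noncomputable def raceProb (x n : ℝ) : ℝ := x / n / (x / n + n)

lemma raceProb_nonneg {x n : ℝ} (hx : 0 ≤ x) (hn : 0 ≤ n) : 0 ≤ raceProb x n := by
  unfold raceProb
  positivity

lemma raceProb_le_one {x n : ℝ} (hx : 0 < x) (hn : 0 < n) : raceProb x n ≤ 1 := by
  rw [raceProb, div_le_one (by positivity)]
  linarith

lemma pow_succ_le_race {x n M R F p : ℝ} (k : ℕ) (hx : 0 < x) (hn : 0 < n) (hF : F = M + R)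
    (hF0 : 0 < F) (hR : R ≤ n) (hp : x / n / F ≤ p) :
    raceProb x n ^ (k + 1)
      ≤ M / F * raceProb x n ^ (k + 1) + p * (raceProb x n ^ k - raceProb x n ^ (k + 1)) := by
  set c := raceProb x n with hc
  have hc0 : 0 ≤ c := raceProb_nonneg hx.le hn.le
  have hc1 : c ≤ 1 := raceProb_le_one hx hn
  have hwin : x / n * (1 - c) = c * n := by rw [hc, raceProb]; field_simp; ring
  have hresidents : c * R / F ≤ p * (1 - c) :=
    calc c * R / F ≤ c * n / F := by gcongr
      _ = x / n / F * (1 - c) := by rw [← hwin]; ring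
      _ ≤ p * (1 - c) := mul_le_mul_of_nonneg_right hp (sub_nonneg.2 hc1)
  have hsplit : M / F * c + c * R / F = c := by rw [hF] at hF0 ⊢; field_simp
  calc c ^ (k + 1) = c ^ k * c := pow_succ c k
    _ ≤ c ^ k * (M / F * c + p * (1 - c)) :=
        mul_le_mul_of_nonneg_left (by linarith) (pow_nonneg hc0 k)
    _ = _ := by ring

section CoverPotential

variable {α U : Type} [DecidableEq α] [Fintype U] [DecidableEq U]

def missing (Y : Finset (α ⊕ U)) : Finset U := univ.filter fun e => Sum.inr e ∉ Y

lemma missing_eq_empty_iff {Y : Finset (α ⊕ U)} : missing Y = ∅ ↔ ∀ e, Sum.inr e ∈ Y := by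
  simp [missing, filter_eq_empty_iff]

lemma missing_insert_subset (v : α ⊕ U) (Y : Finset (α ⊕ U)) :
    missing (insert v Y) ⊆ missing Y := by
  intro e
  simp +contextual [missing]

lemma missing_insert_inr (e : U) (Y : Finset (α ⊕ U)) :
    missing (insert (Sum.inr e) Y) = (missing Y).erase e := by
  ext e'
  simp [missing]

def coverTarget (X : Finset (α ⊕ U)) : Set (Finset (α ⊕ U)) :=
  {Z | (∀ e : U, Sum.inr e ∈ Z) ∧ ∀ a : α, Sum.inl a ∈ X → Sum.inl a ∈ Z}

noncomputable def coverPotential (X : Finset (α ⊕ U)) (c : ℝ) (Y : Finset (α ⊕ U)) : ℝ :=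
  if ∀ a : α, Sum.inl a ∈ X → Sum.inl a ∈ Y then c ^ #(missing Y) else 0

variable {X Y : Finset (α ⊕ U)} {c : ℝ}

lemma coverPotential_of_keep (hkeep : ∀ a : α, Sum.inl a ∈ X → Sum.inl a ∈ Y) :
    coverPotential X c Y = c ^ #(missing Y) := if_pos hkeep

lemma keep_of_coverPotential_pos (h : 0 < coverPotential X c Y) :
    ∀ a : α, Sum.inl a ∈ X → Sum.inl a ∈ Y := by
  by_contra hkeep
  rw [coverPotential, if_neg hkeep] at h
  exact h.false

lemma coverPotential_nonneg (hc : 0 ≤ c) : 0 ≤ coverPotential X c := fun Y => by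
  unfold coverPotential
  split_ifs
  exacts [pow_nonneg hc _, le_rfl]

lemma coverPotential_le_one (hc₀ : 0 ≤ c) (hc₁ : c ≤ 1) : coverPotential X c Y ≤ 1 := by
  unfold coverPotential
  split_ifs
  exacts [pow_le_one₀ hc₀ hc₁, zero_le_one]

end CoverPotential

namespace IsSetCoverGraph

variable {U : Type} [Fintype U] [DecidableEq U] {𝒮 : Finset (Finset U)} {x y n : ℝ}
  {G : FitnessGraph ({A // A ∈ 𝒮} ⊕ U)} {X Y : Finset ({A // A ∈ 𝒮} ⊕ U)}

lemma div_le_fit_div_totalFit_mul_w (hG : IsSetCoverGraph 𝒮 x y G) (hx : 0 < x)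
    (hn : (Fintype.card ({A // A ∈ 𝒮} ⊕ U) : ℝ) ≤ n) {A₀ : {A // A ∈ 𝒮}}
    (hA₀ : Sum.inl A₀ ∈ Y) {e₀ : U} (he₀ : e₀ ∈ A₀.1) :
    x / n / G.totalFit Y ≤ G.fit Y (Sum.inl A₀) / G.totalFit Y * G.w (Sum.inl A₀) (Sum.inr e₀) := by
  obtain ⟨hw, -, -, -, hm, -, -⟩ := hG
  have hA₀pos : (0 : ℝ) < #A₀.1 := by exact_mod_cast card_pos.2 ⟨e₀, he₀⟩
  have hA₀le : (#A₀.1 : ℝ) ≤ n := by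
    refine le_trans ?_ hn
    rw [Fintype.card_sum]
    exact_mod_cast (card_le_univ A₀.1).trans (Nat.le_add_left _ _)
  have := G.totalFit_nonneg Y
  rw [FitnessGraph.fit, if_pos hA₀, hm, hw, if_pos he₀]
  calc x / n / G.totalFit Y = x / G.totalFit Y * (1 / n) := by ring
    _ ≤ x / G.totalFit Y * (1 / #A₀.1) := by gcongr

lemma coverPotential_le_sum_step (hG : IsSetCoverGraph 𝒮 x y G) (hx : 0 < x)
    (hn : (Fintype.card ({A // A ∈ 𝒮} ⊕ U) : ℝ) ≤ n)
    (hXcov : ∀ e : U, ∃ A : {A // A ∈ 𝒮}, Sum.inl A ∈ X ∧ e ∈ A.1)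
    (hkeep : ∀ A : {A // A ∈ 𝒮}, Sum.inl A ∈ X → Sum.inl A ∈ Y) (hY : Y ∉ coverTarget X) :
    coverPotential X (raceProb x n) Y
      ≤ ∑ Z, G.step Y Z * coverPotential X (raceProb x n) Z := by
  obtain ⟨e₀, he₀⟩ : (missing Y).Nonempty :=
    nonempty_iff_ne_empty.2 fun h => hY ⟨missing_eq_empty_iff.1 h, hkeep⟩
  obtain ⟨k, hk⟩ : ∃ k, #(missing Y) = k + 1 :=
    Nat.exists_eq_succ_of_ne_zero (card_ne_zero.2 ⟨e₀, he₀⟩)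
  obtain ⟨A₀, hA₀X, he₀A₀⟩ := hXcov e₀
  have : Nonempty ({A // A ∈ 𝒮} ⊕ U) := ⟨Sum.inr e₀⟩
  have hn0 : 0 < n := lt_of_lt_of_le (by exact_mod_cast Fintype.card_pos) hn
  have hc0 := raceProb_nonneg hx.le hn0.le
  have hc1 := raceProb_le_one hx hn0
  have hkeep' : ∀ v, ∀ A : {A // A ∈ 𝒮}, Sum.inl A ∈ X → Sum.inl A ∈ insert v Y :=
    fun v A hA => mem_insert_of_mem (hkeep A hA)
  have ha : ∀ v, raceProb x n ^ (k + 1) ≤ coverPotential X (raceProb x n) (insert v Y) :=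
    fun v => by
      rw [coverPotential_of_keep (hkeep' v), ← hk]
      exact pow_le_pow_of_le_one hc0 hc1 (card_le_card (missing_insert_subset v Y))
  have hb : raceProb x n ^ k ≤ coverPotential X (raceProb x n) (insert (Sum.inr e₀) Y) := by
    rw [coverPotential_of_keep (hkeep' _), missing_insert_inr, card_erase_of_mem he₀, hk,
      Nat.add_sub_cancel]
  have hr : ∀ u, G.r u = 1 := hG.2.2.2.2.2.2
  rw [coverPotential_of_keep hkeep, hk]
  refine le_trans ?_ (G.le_sum_step_mul (coverPotential_nonneg hc0) ha (hkeep A₀ hA₀X) hb)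
  refine pow_succ_le_race k hx hn0 (G.totalFit_eq_sum_add_card hr Y)
    (G.totalFit_pos Y) (le_trans ?_ hn) (hG.div_le_fit_div_totalFit_mul_w hx hn (hkeep A₀ hA₀X)
    he₀A₀)
  exact_mod_cast card_le_univ _

lemma coverPotential_le_stopMatrix_mulVec (hG : IsSetCoverGraph 𝒮 x y G) (hx : 0 < x)
    (hn : (Fintype.card ({A // A ∈ 𝒮} ⊕ U) : ℝ) ≤ n)
    (hXcov : ∀ e : U, ∃ A : {A // A ∈ 𝒮}, Sum.inl A ∈ X ∧ e ∈ A.1) :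
    coverPotential X (raceProb x n)
      ≤ stopMatrix G (coverTarget X) *ᵥ coverPotential X (raceProb x n) := by
  intro Y
  by_cases hYT : Y ∈ coverTarget X
  · rw [stopMatrix_mulVec_of_mem _ _ hYT]
  have hstep : (stopMatrix G (coverTarget X) *ᵥ coverPotential X (raceProb x n)) Y
      = ∑ Z, G.step Y Z * coverPotential X (raceProb x n) Z := by
    simp [mulVec, dotProduct, stopMatrix_apply_of_notMem _ _ hYT]
  rw [hstep]
  by_cases hkeep : ∀ A : {A // A ∈ 𝒮}, Sum.inl A ∈ X → Sum.inl A ∈ Y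
  · exact hG.coverPotential_le_sum_step hx hn hXcov hkeep hYT
  · rw [coverPotential, if_neg hkeep]
    exact sum_nonneg fun Z _ => mul_nonneg (G.step_nonneg Y Z)
      (coverPotential_nonneg (raceProb_nonneg hx.le ((Nat.cast_nonneg _).trans hn)) Z)

lemma exists_hitProb_pos (hG : IsSetCoverGraph 𝒮 x y G) (hx : 0 < x)
    (hXcov : ∀ e : U, ∃ A : {A // A ∈ 𝒮}, Sum.inl A ∈ X ∧ e ∈ A.1)
    (hkeep : ∀ A : {A // A ∈ 𝒮}, Sum.inl A ∈ X → Sum.inl A ∈ Y) :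
    ∃ t, 0 < hitProb G (coverTarget X) t Y := by
  refine ⟨#(missing Y), ?_⟩
  induction hk : #(missing Y) generalizing Y with
  | zero =>
    have hY : Y ∈ coverTarget X := ⟨missing_eq_empty_iff.1 (card_eq_zero.1 hk), hkeep⟩
    rw [hitProb_of_mem _ _ hY]
    exact one_pos
  | succ k ih =>
    obtain ⟨e₀, he₀⟩ : (missing Y).Nonempty := card_pos.1 (by omega)
    obtain ⟨A₀, hA₀X, he₀A₀⟩ := hXcov e₀
    have : Nonempty ({A // A ∈ 𝒮} ⊕ U) := ⟨Sum.inr e₀⟩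
    have hstep : 0 < G.step Y (insert (Sum.inr e₀) Y) := by
      have := G.totalFit_pos Y
      have : (0 : ℝ) < Fintype.card ({A // A ∈ 𝒮} ⊕ U) := by exact_mod_cast Fintype.card_pos
      exact lt_of_lt_of_le (by positivity) ((hG.div_le_fit_div_totalFit_mul_w hx le_rfl
        (hkeep A₀ hA₀X) he₀A₀).trans (G.fit_div_totalFit_mul_w_le_step (hkeep A₀ hA₀X) _))
    refine hitProb_succ_pos G _ (fun hY => (mem_filter.1 he₀).2 (hY.1 e₀)) hstep (ih ?_ ?_)
    · exact fun A hA => mem_insert_of_mem (hkeep A hA)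
    · rw [missing_insert_inr, card_erase_of_mem he₀, hk, Nat.add_sub_cancel]

end IsSetCoverGraph

theorem reach_all_elements_mutant_general {U : Type} [Fintype U] [DecidableEq U] [Nonempty U]
    (𝒮 : Finset (Finset U))
    (x y : ℝ) (hx : 1 ≤ x)
    (G : FitnessGraph ({A // A ∈ 𝒮} ⊕ U)) (hG : IsSetCoverGraph 𝒮 x y G)
    (X : Finset ({A // A ∈ 𝒮} ⊕ U))
    (hXcov : ∀ e : U, ∃ A : {A // A ∈ 𝒮}, Sum.inl A ∈ X ∧ e ∈ A.1) :
    ((x / (Fintype.card ({A // A ∈ 𝒮} ⊕ U) : ℝ)) /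
        (x / (Fintype.card ({A // A ∈ 𝒮} ⊕ U) : ℝ) +
          (Fintype.card ({A // A ∈ 𝒮} ⊕ U) : ℝ))) ^ (Fintype.card U) ≤
      reachProb G
        {Xstar | (∀ e : U, Sum.inr e ∈ Xstar) ∧
          ∀ A : {A // A ∈ 𝒮}, Sum.inl A ∈ X → Sum.inl A ∈ Xstar} X := by
  set n : ℝ := ((Fintype.card ({A // A ∈ 𝒮} ⊕ U) : ℕ) : ℝ)
  have hx0 : 0 < x := one_pos.trans_le hx
  have hn : 0 < n := Nat.cast_pos.2 Fintype.card_pos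
  have hc0 := raceProb_nonneg hx0.le hn.le
  have hc1 := raceProb_le_one hx0 hn
  calc raceProb x n ^ Fintype.card U ≤ coverPotential X (raceProb x n) X := by
        rw [coverPotential_of_keep fun _ h => h]
        exact pow_le_pow_of_le_one hc0 hc1 (card_le_univ _)
    _ ≤ reachProb G (coverTarget X) X :=
        le_reachProb_of_le_mulVec G _ (hG.coverPotential_le_stopMatrix_mulVec hx0 le_rfl hXcov)
          (fun _ _ => coverPotential_le_one hc0 hc1)
          (fun _ _ hY => hG.exists_hitProb_pos hx0 hXcov (keep_of_coverPotential_pos hY)) X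

/-- From any configuration `X` whose mutant set-nodes cover `V₂`, the process reaches a
configuration `X*` with `V₂ ∪ (X ∩ V₁) ⊆ X*` with probability at least
`((x/n)/((x/n)+n))^{|V₂|}`. -/
theorem reach_all_elements_mutant {U : Type} [Fintype U] [DecidableEq U] [Nonempty U]
    (𝒮 : Finset (Finset U)) (hne : ∀ A ∈ 𝒮, A.Nonempty) (hcov : ∀ e : U, ∃ A ∈ 𝒮, e ∈ A)
    (x y : ℝ) (hx : 1 ≤ x) (hy0 : 0 < y) (hy1 : y ≤ 1)
    (G : FitnessGraph ({A // A ∈ 𝒮} ⊕ U)) (hG : IsSetCoverGraph 𝒮 x y G)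
    (X : Finset ({A // A ∈ 𝒮} ⊕ U))
    (hXcov : ∀ e : U, ∃ A : {A // A ∈ 𝒮}, Sum.inl A ∈ X ∧ e ∈ A.1) :
    ((x / (Fintype.card ({A // A ∈ 𝒮} ⊕ U) : ℝ)) /
        (x / (Fintype.card ({A // A ∈ 𝒮} ⊕ U) : ℝ) +
          (Fintype.card ({A // A ∈ 𝒮} ⊕ U) : ℝ))) ^ (Fintype.card U) ≤
      reachProb G
        {Xstar | (∀ e : U, Sum.inr e ∈ Xstar) ∧
          ∀ A : {A // A ∈ 𝒮}, Sum.inl A ∈ X → Sum.inl A ∈ Xstar} X :=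
  reach_all_elements_mutant_general 𝒮 x y hx G hG X hXcov
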